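/- Suppose U₋₁ : (0,δ)×ℝⁿ → ℝ^d is twice continuously differentiable, U₀, U₁, …, U_n : (0,δ)×ℝⁿ → ℝ^d are continuously differentiable, and the tuple (U₋₁, U₀, U₁, …, U_n) satisfies the first-order system (E₋₁), (E₀), (E_a). Define C_a := U_a − t·∂_a U₋₁ for a = 1,…,n. Then Σ_b Gᵃᵇ·(D C_b − (1+α)·C_b) = 0 holds on (0,δ)×ℝⁿ for each a; in particular, if the n×n matrix (Gᵃᵇ(t,x)) is invertible at every point, then D C_a − (1+α)·C_a = 0 for each a = 1,…,n. -/

import Mathlib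

/-- The Fuchsian time derivative `D u = t·∂_t u` for functions of `(t, x) ∈ ℝ × ℝⁿ`. -/
noncomputable def Dop {n d : ℕ} (u : ℝ × (Fin n → ℝ) → Fin d → ℝ)
    (p : ℝ × (Fin n → ℝ)) : Fin d → ℝ :=
  p.1 • deriv (fun s => u (s, p.2)) p.1

/-- The spatial partial derivative `∂_a u` for functions of `(t, x) ∈ ℝ × ℝⁿ`. -/
noncomputable def pd {n d : ℕ} (a : Fin n) (u : ℝ × (Fin n → ℝ) → Fin d → ℝ)
    (p : ℝ × (Fin n → ℝ)) : Fin d → ℝ :=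
  deriv (fun s => u (p.1, Function.update p.2 a s)) (p.2 a)

/-! Differentiating (E₋₁) `t ∂_t U₋₁ = α U₋₁ + U₀` in `xᵇ` and exchanging the mixed partials
gives `t ∂_t (t ∂_b U₋₁) = (1 + α) t ∂_b U₋₁ + t ∂_b U₀`. Hence `D C_b − (1+α) C_b` is exactly
the expression `D U_b − t ∂_b U₀ − (1+α) U_b` that (E_a) contracts with `Gᵃᵇ`; when `(Gᵃᵇ)` is
invertible the contraction can be undone. -/

open Filter Topology

theorem Matrix.eq_zero_of_isUnit_of_forall_sum_smul_eq_zero {ι R E : Type*} [Fintype ι]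
    [DecidableEq ι] [CommRing R] [AddCommGroup E] [Module R E] {M : Matrix ι ι R}
    (hM : IsUnit M) {w : ι → E} (hw : ∀ a, ∑ b, M a b • w b = 0) : w = 0 := by
  obtain ⟨N, hN⟩ := hM.exists_left_inv
  funext c
  calc w c = ∑ b, (N * M) c b • w b := by simp [hN, Matrix.one_apply]
    _ = ∑ a, N c a • ∑ b, M a b • w b := by
      simp only [Matrix.mul_apply, Finset.sum_smul, Finset.smul_sum, mul_smul]
      exact Finset.sum_comm
    _ = 0 := by simp [hw]

section Slices

variable {n : ℕ} {E : Type*} [NormedAddCommGroup E] [NormedSpace ℝ E]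

theorem tendsto_update_slice (p : ℝ × (Fin n → ℝ)) (a : Fin n) :
    Tendsto (fun s => (p.1, Function.update p.2 a s)) (𝓝 (p.2 a)) (𝓝 p) := by
  have hcont : Continuous fun s => (p.1, Function.update p.2 a s) :=
    continuous_const.prodMk (continuous_const.update a continuous_id)
  simpa using hcont.tendsto (p.2 a)

theorem DifferentiableAt.hasDerivAt_slice_fst {u : ℝ × (Fin n → ℝ) → E}
    {p : ℝ × (Fin n → ℝ)} (hu : DifferentiableAt ℝ u p) :
    HasDerivAt (fun s => u (s, p.2)) (fderiv ℝ u p (1, 0)) p.1 :=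
  hu.hasFDerivAt.comp_hasDerivAt p.1 ((hasDerivAt_id p.1).prodMk (hasDerivAt_const _ _))

theorem DifferentiableAt.hasDerivAt_slice_update {u : ℝ × (Fin n → ℝ) → E}
    {p : ℝ × (Fin n → ℝ)} (hu : DifferentiableAt ℝ u p) (a : Fin n) :
    HasDerivAt (fun s => u (p.1, Function.update p.2 a s))
      (fderiv ℝ u p (0, Pi.single a 1)) (p.2 a) := by
  have hupdate : HasDerivAt (fun s => Function.update p.2 a s) (Pi.single a 1) (p.2 a) := by
    rw [hasDerivAt_pi]
    intro i
    by_cases hi : i = a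
    · subst hi
      simpa using hasDerivAt_id' (p.2 i)
    · simpa [Function.update_apply, hi, Pi.single_apply] using hasDerivAt_const (p.2 a) (p.2 i)
  have hu' : HasFDerivAt u (fderiv ℝ u p) (p.1, Function.update p.2 a (p.2 a)) := by
    simpa using hu.hasFDerivAt
  exact hu'.comp_hasDerivAt _ ((hasDerivAt_const _ _).prodMk hupdate)

end Slices

section Operators

variable {n d : ℕ} {u v : ℝ × (Fin n → ℝ) → Fin d → ℝ} {p : ℝ × (Fin n → ℝ)}

theorem Dop_eq_fderiv (hu : DifferentiableAt ℝ u p) :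
    Dop u p = p.1 • fderiv ℝ u p (1, 0) := by
  rw [Dop, hu.hasDerivAt_slice_fst.deriv]

theorem pd_eq_fderiv (a : Fin n) (hu : DifferentiableAt ℝ u p) :
    pd a u p = fderiv ℝ u p (0, Pi.single a 1) :=
  (hu.hasDerivAt_slice_update a).deriv

theorem hasDerivAt_pd_slice_fst (a : Fin n) (hu : ContDiffAt ℝ 2 u p) :
    HasDerivAt (fun s => pd a u (s, p.2)) (fderiv ℝ (fderiv ℝ u) p (1, 0) (0, Pi.single a 1))
      p.1 := by
  have hdiff : ∀ᶠ q in 𝓝 p, DifferentiableAt ℝ u q :=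
    hu.eventually (by simp) |>.mono fun q hq => hq.differentiableAt (by norm_num)
  have hslice : Tendsto (fun s => (s, p.2)) (𝓝 p.1) (𝓝 p) :=
    (continuous_id.prodMk continuous_const).tendsto p.1
  have hfderiv : DifferentiableAt ℝ (fderiv ℝ u) p :=
    (hu.fderiv_right (m := 1) (by norm_num)).differentiableAt one_ne_zero
  have happly :=
    hfderiv.hasDerivAt_slice_fst.clm_apply (hasDerivAt_const p.1 ((0 : ℝ), Pi.single a 1))
  simp only [map_zero, add_zero] at happly
  refine happly.congr_of_eventuallyEq ?_
  filter_upwards [hslice.eventually hdiff] with s hs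
  simp [pd_eq_fderiv a hs]

theorem smul_fderiv_fderiv_eq_of_Dop_eq (a : Fin n) (α : ℝ) (hu : ContDiffAt ℝ 2 u p)
    (hv : DifferentiableAt ℝ v p) (hE : ∀ᶠ q in 𝓝 p, Dop u q - α • u q - v q = 0) :
    p.1 • fderiv ℝ (fderiv ℝ u) p (0, Pi.single a 1) (1, 0) = α • pd a u p + pd a v p := by
  have hud : DifferentiableAt ℝ u p := hu.differentiableAt (by norm_num)
  have hfderiv : DifferentiableAt ℝ (fderiv ℝ u) p :=
    (hu.fderiv_right (m := 1) (by norm_num)).differentiableAt one_ne_zero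
  have hlhs := (hfderiv.hasDerivAt_slice_update a).clm_apply (hasDerivAt_const _ ((1 : ℝ), 0))
    |>.const_smul p.1
  simp only [map_zero, add_zero] at hlhs
  have hrhs := ((hud.hasDerivAt_slice_update a).const_smul α).add (hv.hasDerivAt_slice_update a)
  have hdiff : ∀ᶠ q in 𝓝 p, DifferentiableAt ℝ u q :=
    hu.eventually (by simp) |>.mono fun q hq => hq.differentiableAt (by norm_num)
  rw [pd_eq_fderiv a hud, pd_eq_fderiv a hv]
  refine (hlhs.congr_of_eventuallyEq ?_).unique (by simpa using hrhs)
  filter_upwards [(tendsto_update_slice p a).eventually (hdiff.and hE)] with s ⟨hs, hEs⟩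
  rw [sub_sub, sub_eq_zero, Dop_eq_fderiv hs] at hEs
  simp [hEs]

theorem Dop_constraint_sub_smul (a : Fin n) (α : ℝ) {U : ℝ × (Fin n → ℝ) → Fin d → ℝ}
    (hU : DifferentiableAt ℝ U p) (hu : ContDiffAt ℝ 2 u p) (hv : DifferentiableAt ℝ v p)
    (hE : ∀ᶠ q in 𝓝 p, Dop u q - α • u q - v q = 0) :
    Dop (fun q => U q - q.1 • pd a u q) p - (1 + α) • (U p - p.1 • pd a u p)
      = Dop U p - p.1 • pd a v p - (1 + α) • U p := by
  have hmixed : p.1 • fderiv ℝ (fderiv ℝ u) p (1, 0) (0, Pi.single a 1)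
      = α • pd a u p + pd a v p := by
    rw [hu.isSymmSndFDerivAt (by simp [minSmoothness_of_isRCLikeNormedField])]
    exact smul_fderiv_fderiv_eq_of_Dop_eq a α hu hv hE
  have hderiv : HasDerivAt (fun s => U (s, p.2) - s • pd a u (s, p.2))
      (fderiv ℝ U p (1, 0)
        - (p.1 • fderiv ℝ (fderiv ℝ u) p (1, 0) (0, Pi.single a 1) + pd a u p)) p.1 := by
    have hsmul := (hasDerivAt_id' p.1).smul (hasDerivAt_pd_slice_fst a hu)
    simp only [one_smul] at hsmul
    exact hU.hasDerivAt_slice_fst.sub hsmul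
  rw [Dop, hderiv.deriv, Dop_eq_fderiv hU, hmixed]
  module

end Operators

theorem stmt_11_general (n d : ℕ) (δ α : ℝ)
    (G : Fin n → Fin n → ℝ × (Fin n → ℝ) → ℝ)
    (Um1 U0 : ℝ × (Fin n → ℝ) → Fin d → ℝ)
    (UA : Fin n → ℝ × (Fin n → ℝ) → Fin d → ℝ)
    (hUm1 : ContDiffOn ℝ 2 Um1 (Set.Ioo (0 : ℝ) δ ×ˢ (Set.univ : Set (Fin n → ℝ))))
    (hU0 : ContDiffOn ℝ 1 U0 (Set.Ioo (0 : ℝ) δ ×ˢ (Set.univ : Set (Fin n → ℝ))))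
    (hUA : ∀ a : Fin n,
      ContDiffOn ℝ 1 (UA a) (Set.Ioo (0 : ℝ) δ ×ˢ (Set.univ : Set (Fin n → ℝ))))
    (hEm1 : ∀ p ∈ Set.Ioo (0 : ℝ) δ ×ˢ (Set.univ : Set (Fin n → ℝ)),
      Dop Um1 p - α • Um1 p - U0 p = 0)
    (hEa : ∀ p ∈ Set.Ioo (0 : ℝ) δ ×ˢ (Set.univ : Set (Fin n → ℝ)), ∀ a : Fin n,
      ∑ b : Fin n, G a b p •
        (Dop (UA b) p - p.1 • pd b U0 p - (1 + α) • UA b p) = 0) :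
    (let CA : Fin n → ℝ × (Fin n → ℝ) → Fin d → ℝ :=
       fun a q => UA a q - q.1 • pd a Um1 q
     (∀ p ∈ Set.Ioo (0 : ℝ) δ ×ˢ (Set.univ : Set (Fin n → ℝ)), ∀ a : Fin n,
        ∑ b : Fin n, G a b p • (Dop (CA b) p - (1 + α) • CA b p) = 0) ∧
     ((∀ p ∈ Set.Ioo (0 : ℝ) δ ×ˢ (Set.univ : Set (Fin n → ℝ)),
         IsUnit (Matrix.of (fun a b : Fin n => G a b p))) →
       ∀ p ∈ Set.Ioo (0 : ℝ) δ ×ˢ (Set.univ : Set (Fin n → ℝ)), ∀ a : Fin n,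
         Dop (CA a) p - (1 + α) • CA a p = 0)) := by
  intro CA
  have hS : IsOpen (Set.Ioo (0 : ℝ) δ ×ˢ (Set.univ : Set (Fin n → ℝ))) :=
    isOpen_Ioo.prod isOpen_univ
  have hreduce : ∀ p ∈ Set.Ioo (0 : ℝ) δ ×ˢ (Set.univ : Set (Fin n → ℝ)), ∀ b : Fin n,
      Dop (CA b) p - (1 + α) • CA b p
        = Dop (UA b) p - p.1 • pd b U0 p - (1 + α) • UA b p := by
    intro p hp b
    have hnhds := hS.mem_nhds hp
    exact Dop_constraint_sub_smul b α (((hUA b).contDiffAt hnhds).differentiableAt one_ne_zero)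
      (hUm1.contDiffAt hnhds) ((hU0.contDiffAt hnhds).differentiableAt one_ne_zero)
      (eventually_of_mem hnhds hEm1)
  have hcontracted : ∀ p ∈ Set.Ioo (0 : ℝ) δ ×ˢ (Set.univ : Set (Fin n → ℝ)), ∀ a : Fin n,
      ∑ b : Fin n, G a b p • (Dop (CA b) p - (1 + α) • CA b p) = 0 := by
    intro p hp a
    simpa only [hreduce p hp] using hEa p hp a
  refine ⟨hcontracted, fun hinv p hp a => ?_⟩
  have hzero := Matrix.eq_zero_of_isUnit_of_forall_sum_smul_eq_zero (hinv p hp)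
    (w := fun b => Dop (CA b) p - (1 + α) • CA b p) (by simpa using hcontracted p hp)
  exact congrFun hzero a

/-- Appendix A, constraint propagation: for a solution `(U₋₁, U₀, U₁, …, U_n)` of the
first-order system (E₋₁), (E₀), (E_a), the constraint quantities `C_a := U_a − t·∂_a U₋₁`
satisfy `Σ_b Gᵃᵇ·(D C_b − (1+α)·C_b) = 0`; in particular, if the matrix `(Gᵃᵇ)` is
invertible at every point of the domain, then `D C_a − (1+α)·C_a = 0` for each `a`. -/
theorem stmt_11 (n d : ℕ) (hn : 0 < n) (hd : 0 < d) (δ α : ℝ) (hδ : 0 < δ)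
    (G0 : Fin n → ℝ × (Fin n → ℝ) → ℝ)
    (G : Fin n → Fin n → ℝ × (Fin n → ℝ) → ℝ)
    (hGsymm : ∀ a b : Fin n, G a b = G b a)
    (h : ℝ × (Fin n → ℝ) → Fin d → ℝ)
    (Um1 U0 : ℝ × (Fin n → ℝ) → Fin d → ℝ)
    (UA : Fin n → ℝ × (Fin n → ℝ) → Fin d → ℝ)
    (hUm1 : ContDiffOn ℝ 2 Um1 (Set.Ioo (0 : ℝ) δ ×ˢ (Set.univ : Set (Fin n → ℝ))))
    (hU0 : ContDiffOn ℝ 1 U0 (Set.Ioo (0 : ℝ) δ ×ˢ (Set.univ : Set (Fin n → ℝ))))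
    (hUA : ∀ a : Fin n,
      ContDiffOn ℝ 1 (UA a) (Set.Ioo (0 : ℝ) δ ×ˢ (Set.univ : Set (Fin n → ℝ))))
    (hEm1 : ∀ p ∈ Set.Ioo (0 : ℝ) δ ×ˢ (Set.univ : Set (Fin n → ℝ)),
      Dop Um1 p - α • Um1 p - U0 p = 0)
    (hE0 : ∀ p ∈ Set.Ioo (0 : ℝ) δ ×ˢ (Set.univ : Set (Fin n → ℝ)),
      Dop U0 p - ∑ a : Fin n, (2 * G0 a p) • (p.1 • pd a U0 p)
          - ∑ a : Fin n, ∑ b : Fin n, G a b p • (p.1 • pd a (UA b) p)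
          - (α * (1 - α)) • Um1 p + (α - 1) • U0 p
        = h p + ∑ a : Fin n, (2 * α * G0 a p) • UA a p)
    (hEa : ∀ p ∈ Set.Ioo (0 : ℝ) δ ×ˢ (Set.univ : Set (Fin n → ℝ)), ∀ a : Fin n,
      ∑ b : Fin n, G a b p •
        (Dop (UA b) p - p.1 • pd b U0 p - (1 + α) • UA b p) = 0) :
    (let CA : Fin n → ℝ × (Fin n → ℝ) → Fin d → ℝ :=
       fun a q => UA a q - q.1 • pd a Um1 q
     (∀ p ∈ Set.Ioo (0 : ℝ) δ ×ˢ (Set.univ : Set (Fin n → ℝ)), ∀ a : Fin n,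
        ∑ b : Fin n, G a b p • (Dop (CA b) p - (1 + α) • CA b p) = 0) ∧
     ((∀ p ∈ Set.Ioo (0 : ℝ) δ ×ˢ (Set.univ : Set (Fin n → ℝ)),
         IsUnit (Matrix.of (fun a b : Fin n => G a b p))) →
       ∀ p ∈ Set.Ioo (0 : ℝ) δ ×ˢ (Set.univ : Set (Fin n → ℝ)), ∀ a : Fin n,
         Dop (CA a) p - (1 + α) • CA a p = 0)) :=
  stmt_11_general n d δ α G Um1 U0 UA hUm1 hU0 hUA hEm1 hEa
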